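/- Let Γ = (U, V; E) be a bipartite (n, d, λ)-expander. Associate with each vertex s ∈ U ∪ V a vector x^s in a finite-dimensional complex Hilbert space, and let ε_U = ‖ (1/n) Σ_{u∈U} x^u ‖ and ε_V = ‖ (1/n) Σ_{v∈V} x^v ‖. Then | (1/(nd)) Σ_{(u,v)∈E} ⟨x^u, x^v⟩ | ≤ λ · ( (1/(2n)) Σ_{s∈U∪V} ‖x^s‖² − ε_U²/2 − ε_V²/2 ) + ε_U ε_V. -/

import Mathlib

/-!
Let `a`, `b` be the means of the vectors on `U` and on `V`. By `d`-regularity the edge sum of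
`⟪x u, x v⟫` is the edge sum for the centred vectors `x u - a`, `x v - b` plus `n d ⟪a, b⟫`, and
the centred vectors have total squared norm `∑ ‖x s‖² - n ‖a‖² - n ‖b‖²`.
For a real function `w` with zero sum on each side, `⟪w, M w⟫ = (2 / d) ∑_E w u * w v` and `w` is
orthogonal to `y⁺` and `y⁻`, so Cauchy–Schwarz and the spectral bound give
`∑_E w u * w v ≤ λ d / 2 ‖w‖²`. Applied to the coordinates of the centred vectors in a real
orthonormal basis, after multiplying the `V` side by the phase that makes the complex edge sum
real and nonnegative, this bounds the centred part by `λ d / 2 (∑ ‖x s‖² - n ‖a‖² - n ‖b‖²)`.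
-/

open scoped BigOperators

/-- The action of the normalized adjacency matrix `M = A/d` of a bipartite graph with
edge set `E ⊆ U × V` on a vector `y : U ⊕ V → ℝ`. -/
noncomputable def adjAct {U V : Type*} [Fintype U] [Fintype V] [DecidableEq U] [DecidableEq V]
    (E : Finset (U × V)) (d : ℕ) (y : U ⊕ V → ℝ) : U ⊕ V → ℝ
  | Sum.inl u => (∑ e ∈ E.filter fun e => e.1 = u, y (Sum.inr e.2)) / d
  | Sum.inr v => (∑ e ∈ E.filter fun e => e.2 = v, y (Sum.inl e.1)) / d

/-- A bipartite `(n, d, λ)`-expander: a connected `d`-regular bipartite graph on parts `U, V`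
of size `n` each, whose normalized adjacency matrix `M` satisfies `‖M y‖ ≤ λ‖y‖` for every
`y` orthogonal to the all-ones vector `y⁺` and to `y⁻` (which is `+1` on `U`, `−1` on `V`). -/
structure BipartiteExpander (U V : Type*) [Fintype U] [Fintype V] [DecidableEq U] [DecidableEq V]
    (n d : ℕ) (lam : ℝ) where
  E : Finset (U × V)
  card_U : Fintype.card U = n
  card_V : Fintype.card V = n
  degU : ∀ u : U, (E.filter fun e => e.1 = u).card = d
  degV : ∀ v : V, (E.filter fun e => e.2 = v).card = d
  connected : ∀ a b : U ⊕ V, Relation.ReflTransGen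
    (fun a b => ∃ e ∈ E, (a = Sum.inl e.1 ∧ b = Sum.inr e.2) ∨
      (a = Sum.inr e.2 ∧ b = Sum.inl e.1)) a b
  spectral : ∀ y : U ⊕ V → ℝ,
    (∑ s : U ⊕ V, y s * 1) = 0 →
    (∑ s : U ⊕ V, y s * Sum.elim (fun _ => (1 : ℝ)) (fun _ => (-1 : ℝ)) s) = 0 →
    Real.sqrt (∑ s : U ⊕ V, adjAct E d y s ^ 2) ≤ lam * Real.sqrt (∑ s : U ⊕ V, y s ^ 2)

/-- The operator (ℓ²→ℓ²) norm of a square complex matrix. -/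
noncomputable def matOpNorm {m : Type*} [Fintype m] [DecidableEq m] (M : Matrix m m ℂ) : ℝ :=
  ‖Matrix.toEuclideanCLM (𝕜 := ℂ) M‖

open Finset Sum

theorem sum_norm_sub_sq_of_sum_eq_card_smul {ι 𝕜 F : Type*} [Fintype ι] [RCLike 𝕜]
    [NormedAddCommGroup F] [InnerProductSpace 𝕜 F] (f : ι → F) (a : F)
    (h : ∑ i, f i = (Fintype.card ι : 𝕜) • a) :
    ∑ i, ‖f i - a‖ ^ 2 = ∑ i, ‖f i‖ ^ 2 - Fintype.card ι * ‖a‖ ^ 2 := by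
  have hre : ∑ i, RCLike.re (inner 𝕜 (f i) a) = Fintype.card ι * ‖a‖ ^ 2 := by
    rw [← map_sum, ← sum_inner, h, inner_smul_left, inner_self_eq_norm_sq_to_K, map_natCast,
      ← RCLike.ofReal_pow, ← RCLike.ofReal_natCast, ← RCLike.ofReal_mul, RCLike.ofReal_re]
  simp only [@norm_sub_sq 𝕜, sum_add_distrib, sum_sub_distrib, ← mul_sum, hre, sum_const,
    card_univ, nsmul_eq_mul]
  ring

section
variable {U V : Type*} [Fintype U] [Fintype V] [DecidableEq U] [DecidableEq V]

theorem sum_mul_adjAct (E : Finset (U × V)) (d : ℕ) (w : U ⊕ V → ℝ) :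
    ∑ s, w s * adjAct E d w s = 2 / d * ∑ e ∈ E, w (inl e.1) * w (inr e.2) := by
  have hU (u : U) : w (inl u) * adjAct E d w (inl u) =
      (∑ e ∈ E with e.1 = u, w (inl e.1) * w (inr e.2)) / d := by
    rw [adjAct, mul_div_assoc', mul_sum]
    congr 1
    exact sum_congr rfl fun e he => by rw [(mem_filter.1 he).2]
  have hV (v : V) : w (inr v) * adjAct E d w (inr v) =
      (∑ e ∈ E with e.2 = v, w (inl e.1) * w (inr e.2)) / d := by
    rw [adjAct, mul_div_assoc', mul_sum]
    congr 1
    exact sum_congr rfl fun e he => by rw [(mem_filter.1 he).2, mul_comm]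
  simp only [Fintype.sum_sum_type, hU, hV, ← sum_div, sum_fiberwise]
  ring

namespace BipartiteExpander

variable {n d : ℕ} {lam : ℝ}

theorem degree_pos (Γ : BipartiteExpander U V n d lam) (hn : 0 < n) : 0 < d := by
  obtain ⟨u⟩ : Nonempty U := Fintype.card_pos_iff.mp (Γ.card_U ▸ hn)
  obtain ⟨v⟩ : Nonempty V := Fintype.card_pos_iff.mp (Γ.card_V ▸ hn)
  rcases (Γ.connected (inl u) (inr v)).cases_head with h | ⟨_, ⟨e, he, _⟩, _⟩
  · exact absurd h inl_ne_inr
  · rw [← Γ.degU e.1, card_pos]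
    exact ⟨e, mem_filter.2 ⟨he, rfl⟩⟩

variable (Γ : BipartiteExpander U V n d lam)

theorem sum_fst_eq_nsmul {M : Type*} [AddCommMonoid M] (f : U → M) :
    ∑ e ∈ Γ.E, f e.1 = d • ∑ u, f u := by
  rw [← sum_fiberwise' Γ.E Prod.fst f, smul_sum]
  simp only [sum_const, Γ.degU]

theorem sum_snd_eq_nsmul {M : Type*} [AddCommMonoid M] (f : V → M) :
    ∑ e ∈ Γ.E, f e.2 = d • ∑ v, f v := by
  rw [← sum_fiberwise' Γ.E Prod.snd f, smul_sum]
  simp only [sum_const, Γ.degV]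

theorem card_E : #Γ.E = n * d := by
  rw [card_eq_sum_ones, Γ.sum_fst_eq_nsmul (fun _ => 1), sum_const, card_univ, Γ.card_U,
    smul_eq_mul, smul_eq_mul, mul_one, mul_comm]

theorem sum_mul_adjAct_le (w : U ⊕ V → ℝ) (hU : ∑ u, w (inl u) = 0)
    (hV : ∑ v, w (inr v) = 0) :
    ∑ s, w s * adjAct Γ.E d w s ≤ lam * ∑ s, w s ^ 2 := by
  have hspec := Γ.spectral w (by simp [Fintype.sum_sum_type, hU, hV])
    (by simp [Fintype.sum_sum_type, hU, hV])
  calc ∑ s, w s * adjAct Γ.E d w s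
      ≤ √(∑ s, w s ^ 2) * √(∑ s, adjAct Γ.E d w s ^ 2) := Real.sum_mul_le_sqrt_mul_sqrt _ _ _
    _ ≤ √(∑ s, w s ^ 2) * (lam * √(∑ s, w s ^ 2)) := by gcongr
    _ = lam * ∑ s, w s ^ 2 := by
      rw [mul_left_comm, Real.mul_self_sqrt (by positivity)]

theorem sum_edge_mul_le (hd : 0 < d) (w : U ⊕ V → ℝ) (hU : ∑ u, w (inl u) = 0)
    (hV : ∑ v, w (inr v) = 0) :
    ∑ e ∈ Γ.E, w (inl e.1) * w (inr e.2) ≤ lam * d / 2 * ∑ s, w s ^ 2 := by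
  have h := Γ.sum_mul_adjAct_le w hU hV
  rw [sum_mul_adjAct, div_mul_eq_mul_div, div_le_iff₀ (by positivity)] at h
  linarith

open scoped RealInnerProductSpace in
theorem sum_edge_inner_le {F : Type*} [NormedAddCommGroup F] [InnerProductSpace ℝ F]
    [FiniteDimensional ℝ F] (hd : 0 < d) (y : U ⊕ V → F) (hU : ∑ u, y (inl u) = 0)
    (hV : ∑ v, y (inr v) = 0) :
    ∑ e ∈ Γ.E, ⟪y (inl e.1), y (inr e.2)⟫ ≤ lam * d / 2 * ∑ s, ‖y s‖ ^ 2 := by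
  let b := stdOrthonormalBasis ℝ F
  have hcoord (i) : ∑ e ∈ Γ.E, ⟪b i, y (inl e.1)⟫ * ⟪b i, y (inr e.2)⟫ ≤
      lam * d / 2 * ∑ s, ⟪b i, y s⟫ ^ 2 :=
    Γ.sum_edge_mul_le hd (fun s => ⟪b i, y s⟫) (by rw [← inner_sum, hU, inner_zero_right])
      (by rw [← inner_sum, hV, inner_zero_right])
  calc ∑ e ∈ Γ.E, ⟪y (inl e.1), y (inr e.2)⟫
      = ∑ i, ∑ e ∈ Γ.E, ⟪b i, y (inl e.1)⟫ * ⟪b i, y (inr e.2)⟫ := by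
        rw [sum_comm]
        refine sum_congr rfl fun e _ => ?_
        rw [← b.sum_inner_mul_inner]
        simp only [real_inner_comm (b _)]
    _ ≤ ∑ i, lam * d / 2 * ∑ s, ⟪b i, y s⟫ ^ 2 := sum_le_sum fun i _ => hcoord i
    _ = lam * d / 2 * ∑ s, ‖y s‖ ^ 2 := by
      rw [← mul_sum, sum_comm]
      exact congrArg _ (sum_congr rfl fun s _ => b.sum_sq_inner_right (y s))

theorem norm_sum_edge_inner_le {F : Type*} [NormedAddCommGroup F] [InnerProductSpace ℂ F]
    [FiniteDimensional ℂ F] (hd : 0 < d) (y : U ⊕ V → F) (hU : ∑ u, y (inl u) = 0)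
    (hV : ∑ v, y (inr v) = 0) :
    ‖∑ e ∈ Γ.E, inner ℂ (y (inl e.1)) (y (inr e.2))‖ ≤ lam * d / 2 * ∑ s, ‖y s‖ ^ 2 := by
  obtain ⟨c, hc, hcZ⟩ :=
    Complex.exists_norm_eq_mul_self (∑ e ∈ Γ.E, inner ℂ (y (inl e.1)) (y (inr e.2)))
  let z : U ⊕ V → F := Sum.elim (y ∘ inl) (fun v => c • y (inr v))
  let : InnerProductSpace ℝ F := .complexToReal
  have hz (s) : ‖z s‖ = ‖y s‖ := by cases s <;> simp [z, norm_smul, hc]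
  calc ‖∑ e ∈ Γ.E, inner ℂ (y (inl e.1)) (y (inr e.2))‖
      = ∑ e ∈ Γ.E, inner ℝ (z (inl e.1)) (z (inr e.2)) := by
        rw [← Complex.ofReal_re ‖_‖, hcZ, mul_sum, Complex.re_sum]
        simp [z, real_inner_eq_re_inner, inner_smul_right]
    _ ≤ lam * d / 2 * ∑ s, ‖z s‖ ^ 2 :=
        Γ.sum_edge_inner_le hd z hU (by simp [z, ← smul_sum, hV])
    _ = lam * d / 2 * ∑ s, ‖y s‖ ^ 2 := by simp only [hz]

theorem sum_edge_inner_eq_sum_edge_inner_sub {𝕜 F : Type*} [RCLike 𝕜] [NormedAddCommGroup F]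
    [InnerProductSpace 𝕜 F] (x : U ⊕ V → F) (a b : F) (hU : ∑ u, x (inl u) = (n : 𝕜) • a)
    (hV : ∑ v, x (inr v) = (n : 𝕜) • b) :
    ∑ e ∈ Γ.E, inner 𝕜 (x (inl e.1)) (x (inr e.2)) =
      ∑ e ∈ Γ.E, inner 𝕜 (x (inl e.1) - a) (x (inr e.2) - b) + (n * d : ℕ) * inner 𝕜 a b := by
  simp only [inner_sub_left, inner_sub_right, sum_sub_distrib, ← sum_inner, ← inner_sum,
    Γ.sum_fst_eq_nsmul (fun u => x (inl u)), Γ.sum_snd_eq_nsmul (fun v => x (inr v)), hU, hV,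
    ← Nat.cast_smul_eq_nsmul 𝕜, smul_smul, inner_smul_left, inner_smul_right, sum_const,
    Γ.card_E]
  simp only [Nat.cast_mul, map_mul, map_natCast]
  ring

theorem norm_sum_edge_inner_sub_le {F : Type*} [NormedAddCommGroup F] [InnerProductSpace ℂ F]
    [FiniteDimensional ℂ F] (hd : 0 < d) (x : U ⊕ V → F) (a b : F)
    (hU : ∑ u, x (inl u) = (n : ℂ) • a) (hV : ∑ v, x (inr v) = (n : ℂ) • b) :
    ‖∑ e ∈ Γ.E, inner ℂ (x (inl e.1) - a) (x (inr e.2) - b)‖ ≤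
      lam * d / 2 * (∑ s, ‖x s‖ ^ 2 - n * ‖a‖ ^ 2 - n * ‖b‖ ^ 2) := by
  let y : U ⊕ V → F := fun s => x s - Sum.elim (fun _ => a) (fun _ => b) s
  have hyU := sum_norm_sub_sq_of_sum_eq_card_smul _ a (by rw [Γ.card_U]; exact hU)
  have hyV := sum_norm_sub_sq_of_sum_eq_card_smul _ b (by rw [Γ.card_V]; exact hV)
  rw [Γ.card_U] at hyU
  rw [Γ.card_V] at hyV
  have hy : ∑ s, ‖y s‖ ^ 2 = ∑ s, ‖x s‖ ^ 2 - n * ‖a‖ ^ 2 - n * ‖b‖ ^ 2 := by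
    simp only [Fintype.sum_sum_type, y, Sum.elim_inl, Sum.elim_inr, hyU, hyV]
    ring
  rw [← hy]
  exact Γ.norm_sum_edge_inner_le hd y
    (by simp [y, hU, Γ.card_U, Nat.cast_smul_eq_nsmul])
    (by simp [y, hV, Γ.card_V, Nat.cast_smul_eq_nsmul])

end BipartiteExpander
end

/-- Lemma 11 of the paper: for vectors `x^s` on the vertices of a bipartite
`(n, d, λ)`-expander with side averages of norms `ε_U` and `ε_V`,
`|(1/(nd)) ∑_{(u,v)∈E} ⟨x^u, x^v⟩| ≤ λ((1/(2n))∑_s ‖x^s‖² − ε_U²/2 − ε_V²/2) + ε_U ε_V`. -/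
theorem expander_vector_mixing_sloppy {U V : Type*} [Fintype U] [Fintype V]
    [DecidableEq U] [DecidableEq V] {n d : ℕ} {lam : ℝ}
    (Γ : BipartiteExpander U V n d lam) {m : ℕ}
    (x : U ⊕ V → EuclideanSpace ℂ (Fin m)) {εU εV : ℝ}
    (hU : ‖(n : ℂ)⁻¹ • ∑ u : U, x (Sum.inl u)‖ = εU)
    (hV : ‖(n : ℂ)⁻¹ • ∑ v : V, x (Sum.inr v)‖ = εV) :
    ‖((n * d : ℕ) : ℂ)⁻¹ *
        ∑ e ∈ Γ.E, (inner ℂ (x (Sum.inl e.1)) (x (Sum.inr e.2)) : ℂ)‖ ≤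
      lam * ((((2 * n : ℕ) : ℝ)⁻¹ * ∑ s : U ⊕ V, ‖x s‖ ^ 2) - εU ^ 2 / 2 - εV ^ 2 / 2) +
        εU * εV := by
  rcases Nat.eq_zero_or_pos n with rfl | hn
  · have : IsEmpty U := Fintype.card_eq_zero_iff.mp Γ.card_U
    have : IsEmpty V := Fintype.card_eq_zero_iff.mp Γ.card_V
    simp [← hU, ← hV]
  have hd := Γ.degree_pos hn
  set a := (n : ℂ)⁻¹ • ∑ u, x (inl u)
  set b := (n : ℂ)⁻¹ • ∑ v, x (inr v)
  have hn' : (n : ℂ) ≠ 0 := by exact_mod_cast hn.ne'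
  have hnd : ((n * d : ℕ) : ℂ) ≠ 0 := Nat.cast_ne_zero.mpr (by positivity)
  have ha : ∑ u, x (inl u) = (n : ℂ) • a := (smul_inv_smul₀ hn' _).symm
  have hb : ∑ v, x (inr v) = (n : ℂ) • b := (smul_inv_smul₀ hn' _).symm
  calc _ = ‖((n * d : ℕ) : ℂ)⁻¹ * ∑ e ∈ Γ.E, inner ℂ (x (inl e.1) - a) (x (inr e.2) - b) +
          inner ℂ a b‖ := by
        rw [Γ.sum_edge_inner_eq_sum_edge_inner_sub x a b ha hb, mul_add, inv_mul_cancel_left₀ hnd]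
    _ ≤ ((n * d : ℕ) : ℝ)⁻¹ * (lam * d / 2 * (∑ s, ‖x s‖ ^ 2 - n * ‖a‖ ^ 2 - n * ‖b‖ ^ 2)) +
          ‖a‖ * ‖b‖ := by
        grw [norm_add_le, norm_mul, norm_inner_le_norm, Γ.norm_sum_edge_inner_sub_le hd x a b ha hb]
        simp
    _ = _ := by
        rw [hU, hV]
        push_cast
        field_simp
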